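/- Let G be a finite group of order n ≥ 2 and A a finite set of size q ≥ 2. Say a G-equivariant transformation τ : A^G → A^G admits memory set S ⊆ G if there exists μ : (S → A) → A with (τ x)(g) = μ(fun s => x(s·g)) for all x ∈ A^G, g ∈ G. If T is a set of G-equivariant transformations of A^G that generates, as a monoid under composition, the monoid of all G-equivariant transformations of A^G, then there exists τ ∈ T which does not admit any proper subset S ⊊ G as a memory set (i.e. whose minimal memory set is G itself). -/

import Mathlib

variable {G A : Type*}

/-- The right shift action of `G` on configurations `A^G`: `(x · g) h = x (h * g⁻¹)`. -/
def shift [Group G] (x : G → A) (g : G) : G → A := fun h => x (h * g⁻¹)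

/-- A transformation of the configuration space is `G`-equivariant if it commutes
with the shift action. -/
def equivariant [Group G] (τ : (G → A) → (G → A)) : Prop :=
  ∀ (x : G → A) (g : G), τ (shift x g) = shift (τ x) g

/-- The `G`-orbit of a configuration. -/
def orbit [Group G] (x : G → A) : Set (G → A) := Set.range (shift x)

/-- The stabilizer of a configuration, as a subgroup of `G`. -/
def stab [Group G] (x : G → A) : Subgroup G where
  carrier := {g : G | shift x g = x}
  one_mem' := by
    show shift x 1 = x
    funext h
    simp [shift]
  mul_mem' := by
    intro a b ha hb
    have ha' : shift x a = x := ha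
    have hb' : shift x b = x := hb
    show shift x (a * b) = x
    funext h
    show x (h * (a * b)⁻¹) = x h
    have key : h * (a * b)⁻¹ = h * b⁻¹ * a⁻¹ := by group
    rw [key]
    have h1 := congrFun ha' (h * b⁻¹)
    have h2 := congrFun hb' h
    simp only [shift] at h1 h2
    rw [h1, h2]
  inv_mem' := by
    intro a ha
    have ha' : shift x a = x := ha
    show shift x a⁻¹ = x
    funext h
    show x (h * a⁻¹⁻¹) = x h
    rw [inv_inv]
    have h1 := congrFun ha' (h * a)
    simp only [shift] at h1
    rw [mul_inv_cancel_right] at h1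
    exact h1.symm

/-- Two subgroups `H`, `K` of `G` are conjugate, namely `K = g⁻¹ * H * g` for some `g ∈ G`. -/
def conjSub [Group G] (H K : Subgroup G) : Prop :=
  ∃ g : G, ∀ a : G, a ∈ K ↔ g * a * g⁻¹ ∈ H

/-- `τ` admits `S ⊆ G` as a memory set if there is a local function `μ : A^S → A`
with `(τ x) g = μ (fun s => x (s * g))`. -/
def admitsMemorySet [Group G] (τ : (G → A) → (G → A)) (S : Set G) : Prop :=
  ∃ μ : (S → A) → A, ∀ (x : G → A) (g : G), τ x g = μ (fun s => x (s.val * g))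

/-!
Let `σ` be the equivariant map that sends every constant configuration to one fixed constant
and fixes all other configurations; its only collisions are between constants. If every
generator had a proper memory set, a generator `τ` whose collisions lie among constants would be
injective: it permutes the non-constant configurations, and if the constant configuration with
value `v` were not the image of a constant, the configurations `x` with `(τ x) 1 = v` would be in
bijection with the `q ^ (n - 1) - 1` non-constant `y` with `y 1 = v`, whereas a proper memory set
makes their number a multiple of `q`. This injectivity propagates to products whose collisions
lie among constants, so `σ` would be injective, which it is not.
-/

open Function Set

/-- The only collisions of `f` are between points of `C`. -/
def InjectiveOutside {α β : Type*} (f : α → β) (C : Set α) : Prop :=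
  ∀ x y, f x = f y → x = y ∨ (x ∈ C ∧ y ∈ C)

namespace InjectiveOutside

variable {α β γ : Type*} {C : Set α}

lemma of_comp {f : β → γ} {g : α → β} (h : InjectiveOutside (f ∘ g) C) :
    InjectiveOutside g C :=
  fun x y hxy => h x y (congrArg f hxy)

lemma of_comp_left {f : α → γ} {g : α → α} (h : InjectiveOutside (f ∘ g) C)
    (hg : Surjective g) (hgC : MapsTo g C C) : InjectiveOutside f C := by
  intro w w' hww'
  obtain ⟨x, rfl⟩ := hg w
  obtain ⟨y, rfl⟩ := hg w'
  rcases h x y hww' with rfl | ⟨hx, hy⟩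
  · exact Or.inl rfl
  · exact Or.inr ⟨hgC hx, hgC hy⟩

lemma injOn_compl {f : α → β} (h : InjectiveOutside f C) : InjOn f Cᶜ := by
  intro x hx y _ hxy
  rcases h x y hxy with hxy' | ⟨hx', _⟩
  exacts [hxy', absurd hx' hx]

lemma injective_of_injOn {f : α → β} (h : InjectiveOutside f C) (hC : InjOn f C) :
    Injective f := by
  intro x y hxy
  rcases h x y hxy with hxy' | ⟨hx, hy⟩
  exacts [hxy', hC hx hy hxy]

lemma piecewise_const [DecidablePred (· ∈ C)] {c : α} (hc : c ∈ C) :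
    InjectiveOutside (C.piecewise (fun _ => c) id) C := by
  intro x y hxy
  by_cases hx : x ∈ C <;> by_cases hy : y ∈ C <;>
    simp only [Set.piecewise, hx, hy, if_true, if_false, id] at hxy
  · exact Or.inr ⟨hx, hy⟩
  · exact absurd (hxy ▸ hc) hy
  · exact absurd (hxy ▸ hc) hx
  · exact Or.inl hxy

lemma injective_comp [Finite α] {f g : α → α} (hgC : MapsTo g C C)
    (hf : InjectiveOutside f C → Injective f) (hg : InjectiveOutside g C → Injective g)
    (h : InjectiveOutside (f ∘ g) C) : Injective (f ∘ g) := by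
  have hg_inj := hg h.of_comp
  exact (hf (h.of_comp_left (Finite.injective_iff_surjective.mp hg_inj) hgC)).comp hg_inj

lemma injective_of_mem_closure [Finite α] {T : Set (Function.End α)}
    (hT : ∀ τ ∈ T, MapsTo τ C C ∧ (InjectiveOutside τ C → Injective τ))
    {f : Function.End α} (hf : f ∈ Submonoid.closure T) (h : InjectiveOutside f C) :
    Injective f := by
  refine (Submonoid.closure_induction
    (motive := fun (f : Function.End α) _ =>
      MapsTo f C C ∧ (InjectiveOutside f C → Injective f))
    hT ⟨mapsTo_id C, fun _ => injective_id⟩ ?_ hf).2 h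
  rintro f g - - ⟨hfC, hf⟩ ⟨hgC, hg⟩
  exact ⟨hfC.comp hgC, injective_comp hgC hf hg⟩

end InjectiveOutside

lemma card_dvd_ncard_setOf_domRestrict {ι α : Type*} [Finite ι] {S : Set ι} (hS : S ≠ univ)
    (R : (S → α) → Prop) :
    Nat.card α ∣ {x : ι → α | R (S.domRestrict x)}.ncard := by
  classical
  rw [← Nat.card_coe_set_eq]
  have e :
      {x : ι → α | R (S.domRestrict x)} ≃ {f : S → α // R f} × ({i // i ∉ S} → α) :=
    ((Equiv.piEquivPiSubtypeProd (· ∈ S) fun _ => α).subtypeEquiv fun _ => Iff.rfl).trans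
      Equiv.prodSubtypeFstEquivSubtypeProd
  obtain ⟨i, hi⟩ := ne_univ_iff_exists_notMem S |>.mp hS
  have hcompl : Nat.card {i // i ∉ S} ≠ 0 :=
    Nat.card_ne_zero.mpr ⟨⟨⟨i, hi⟩⟩, inferInstance⟩
  rw [Nat.card_congr e, Nat.card_prod, Nat.card_fun]
  exact dvd_mul_of_dvd_right (dvd_pow_self _ hcompl) _

section CellularAutomata

variable [Group G]

lemma shift_shift (x : G → A) (g h : G) : shift (shift x g) h = shift x (g * h) := by
  funext k
  simp only [shift, mul_inv_rev, mul_assoc]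

lemma shift_one (x : G → A) : shift x 1 = x := by
  funext k
  simp [shift]

lemma shift_const (a : A) (g : G) : shift (const G a) g = const G a := rfl

lemma mem_range_const_of_forall_shift_eq {x : G → A} (h : ∀ g, shift x g = x) :
    x ∈ range (const G) :=
  ⟨x 1, funext fun k => by simpa [shift] using (congrFun (h k⁻¹) 1).symm⟩

lemma shift_mem_range_const_iff {x : G → A} {g : G} :
    shift x g ∈ range (const G) ↔ x ∈ range (const G) := by
  constructor
  · rintro ⟨a, ha⟩
    refine ⟨a, ?_⟩
    rw [← shift_one x, ← mul_inv_cancel g, ← shift_shift, ← ha, shift_const]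
  · rintro ⟨a, rfl⟩
    exact ⟨a, rfl⟩

namespace equivariant

variable {τ : (G → A) → (G → A)}

lemma mapsTo_range_const (hτ : equivariant τ) :
    MapsTo τ (range (const G)) (range (const G)) := by
  rintro _ ⟨a, rfl⟩
  exact mem_range_const_of_forall_shift_eq fun g => by rw [← hτ, shift_const]

/-- Under `InjectiveOutside`, a non-constant `x` has a shift `x · g ≠ x` with the same image. -/
lemma mem_range_const_of_apply_mem (hτ : equivariant τ)
    (hinj : InjectiveOutside τ (range (const G))) {x : G → A}
    (hx : τ x ∈ range (const G)) : x ∈ range (const G) := by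
  by_contra hxC
  obtain ⟨g, hg⟩ : ∃ g, shift x g ≠ x := by
    by_contra! h
    exact hxC (mem_range_const_of_forall_shift_eq h)
  obtain ⟨c, hc⟩ := hx
  have hcollide : τ (shift x g) = τ x := by rw [hτ, ← hc, shift_const]
  rcases hinj _ _ hcollide with h | ⟨_, h⟩
  exacts [hg h, hxC h]

end equivariant

lemma equivariant_piecewise_range_const [DecidablePred (· ∈ range (const G : A → G → A))]
    (a : A) : equivariant ((range (const G)).piecewise (fun _ => const G a) id) := by
  intro x g
  by_cases hx : x ∈ range (const G)
  · rw [piecewise_eq_of_mem _ _ _ (shift_mem_range_const_iff.mpr hx), piecewise_eq_of_mem _ _ _ hx,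
      shift_const]
  · rw [piecewise_eq_of_notMem _ _ _ (mt shift_mem_range_const_iff.mp hx),
      piecewise_eq_of_notMem _ _ _ hx, id, id]

namespace admitsMemorySet

variable {τ : (G → A) → (G → A)} {S : Set G}

lemma equivariant (h : admitsMemorySet τ S) : equivariant τ := by
  obtain ⟨μ, hμ⟩ := h
  intro x g
  funext k
  simp only [shift, hμ, mul_assoc]

lemma card_dvd_ncard_setOf_apply_one_eq [Finite G] [Finite A] (h : admitsMemorySet τ S)
    (hS : S ≠ univ) (v : A) : Nat.card A ∣ {x | τ x 1 = v}.ncard := by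
  obtain ⟨μ, hμ⟩ := h
  have hlocal : ∀ x, τ x 1 = μ (S.domRestrict x) := fun x =>
    (hμ x 1).trans (congrArg μ (funext fun s => congrArg x (mul_one s.val)))
  simp only [hlocal]
  exact card_dvd_ncard_setOf_domRestrict hS (μ · = v)

lemma id_singleton_one : admitsMemorySet (id : (G → A) → (G → A)) {1} :=
  ⟨fun f => f ⟨1, rfl⟩, fun x g => by simp⟩

variable [Finite G] [Nontrivial G] [Finite A] [Nontrivial A]

lemma surjOn_range_const (h : admitsMemorySet τ S) (hS : S ≠ univ)
    (hbij : BijOn τ (range (const G))ᶜ (range (const G))ᶜ) :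
    SurjOn τ (range (const G)) (range (const G)) := by
  rintro _ ⟨v, rfl⟩
  by_contra hv
  have hfiber : {x | τ x 1 = v} ⊆ (range (const G))ᶜ := by
    rintro x hx ⟨a, rfl⟩
    obtain ⟨b, hb⟩ := h.equivariant.mapsTo_range_const (mem_range_self (f := const G) a)
    obtain rfl : b = v := (congrFun hb 1).trans hx
    exact hv ⟨const G a, mem_range_self a, hb.symm⟩
  have himage : τ '' {x | τ x 1 = v} = {y | y 1 = v} \ {const G v} := by
    ext y
    constructor
    · rintro ⟨x, hx, rfl⟩
      refine ⟨hx, fun hy => hbij.mapsTo (hfiber hx) ?_⟩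
      exact ⟨v, hy.symm⟩
    · rintro ⟨hy1, hyv⟩
      have hyC : y ∉ range (const G) := by
        rintro ⟨a, rfl⟩
        exact hyv (congrArg (const G) hy1)
      obtain ⟨x, -, rfl⟩ := hbij.surjOn hyC
      exact ⟨x, hy1, rfl⟩
  have hcount : {x | τ x 1 = v}.ncard + 1 = {y : G → A | y 1 = v}.ncard := by
    rw [← (hbij.injOn.mono hfiber).ncard_image, himage,
      ncard_sdiff_singleton_add_one (show const G v ∈ {y | y 1 = v} from rfl)]
  have hdvd : Nat.card A ∣ 1 := (Nat.dvd_add_right (h.card_dvd_ncard_setOf_apply_one_eq hS v)).mp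
    (hcount ▸ id_singleton_one.card_dvd_ncard_setOf_apply_one_eq (singleton_ne_univ 1) v)
  exact Finite.one_lt_card.ne' (Nat.dvd_one.mp hdvd)

lemma injective (h : admitsMemorySet τ S) (hS : S ≠ univ)
    (hinj : InjectiveOutside τ (range (const G))) : Injective τ := by
  have hτ := h.equivariant
  have hmaps : MapsTo τ (range (const G))ᶜ (range (const G))ᶜ :=
    fun _ hx hτx => hx (hτ.mem_range_const_of_apply_mem hinj hτx)
  have hbij := ((toFinite _).injOn_iff_bijOn_of_mapsTo hmaps).mp hinj.injOn_compl
  have hsurj := h.surjOn_range_const hS hbij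
  exact hinj.injective_of_injOn
    (((toFinite _).surjOn_iff_bijOn_of_mapsTo hτ.mapsTo_range_const).mp hsurj).injOn

end admitsMemorySet

end CellularAutomata

theorem generating_set_full_memory_general [Group G] [Fintype G] [Fintype A]
    (hn : 2 ≤ Fintype.card G) (hq : 2 ≤ Fintype.card A)
    (T : Set (Function.End (G → A)))
    (hgen : ∀ σ : Function.End (G → A), equivariant σ → σ ∈ Submonoid.closure T) :
    ∃ τ ∈ T, ∀ S : Set G, admitsMemorySet τ S → S = Set.univ := by
  classical
  have : Nontrivial G := Fintype.one_lt_card_iff_nontrivial.mp hn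
  have : Nontrivial A := Fintype.one_lt_card_iff_nontrivial.mp hq
  obtain ⟨a₀, a₁, ha⟩ := exists_pair_ne A
  by_contra! hproper
  have hrigid : ∀ τ ∈ T, MapsTo τ (range (const G)) (range (const G)) ∧
      (InjectiveOutside τ (range (const G)) → Injective τ) := by
    intro τ hτ
    obtain ⟨S, hS, hSne⟩ := hproper τ hτ
    exact ⟨hS.equivariant.mapsTo_range_const, hS.injective hSne⟩
  let σ : Function.End (G → A) := (range (const G)).piecewise (fun _ => const G a₀) id
  have hσ : Injective σ := InjectiveOutside.injective_of_mem_closure hrigid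
    (hgen σ (equivariant_piecewise_range_const a₀))
    (InjectiveOutside.piecewise_const (mem_range_self a₀))
  have hcollide : σ (const G a₀) = σ (const G a₁) := by
    simp only [σ, piecewise_eq_of_mem _ _ _ (mem_range_self _)]
  exact ha (congrFun (hσ hcollide) 1)

/-- minimal memory set of generators: if a set `T` of
`G`-equivariant transformations generates, under composition, the monoid of all
`G`-equivariant transformations of `A^G`, then some `τ ∈ T` admits no proper subset
of `G` as a memory set. -/
theorem generating_set_full_memory [Group G] [Fintype G] [Fintype A]
    (hn : 2 ≤ Fintype.card G) (hq : 2 ≤ Fintype.card A)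
    (T : Set (Function.End (G → A)))
    (hT : ∀ τ ∈ T, equivariant τ)
    (hgen : ∀ σ : Function.End (G → A), equivariant σ → σ ∈ Submonoid.closure T) :
    ∃ τ ∈ T, ∀ S : Set G, admitsMemorySet τ S → S = Set.univ :=
  generating_set_full_memory_general hn hq T hgen
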